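/- Let Γ be a group, G = ℤ ≀ Γ, N = ⊕_Γ ℤ. Let k ∈ ℕ and λ_1,…,λ_k ∈ Γ nontrivial, Λ = ⟨λ_1,…,λ_k⟩, and set x = Σ_{i=1}^k δ_{λ_i} − k·δ_{e_Γ} ∈ N, where δ_γ is the Kronecker delta at γ. Then cl_{G,N}(x) = intrk^Γ(Λ). -/

import Mathlib

open Finsupp
open scoped commutatorElement

/-- The multiplicative group structure that older Mathlib put on `AddAut M` (composition). -/
instance AddAut.instGroupOld {M : Type*} [Add M] : Group (AddAut M) where
  mul g h := AddEquiv.trans h g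
  one := AddEquiv.refl _
  inv := AddEquiv.symm
  mul_assoc _ _ _ := rfl
  one_mul _ := rfl
  mul_one _ := rfl
  inv_mul_cancel := AddEquiv.self_trans_symm

@[simp]
theorem AddAut.mul_apply_old {M : Type*} [Add M] (e₁ e₂ : AddAut M) (m : M) : (e₁ * e₂) m = e₁ (e₂ m) :=
  rfl

@[simp]
theorem AddAut.one_apply_old {M : Type*} [Add M] (m : M) : (1 : AddAut M) m = m :=
  rfl

variable (A : Type*) [AddCommGroup A] (Γ : Type*) [Group Γ]

/-- The shift action of `Γ` on `⊕_Γ A`: `(γ • u) x = u (γ⁻¹ * x)`. -/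
noncomputable def shiftHom : Γ →* AddAut (Γ →₀ A) where
  toFun γ := (Finsupp.domCongr (Equiv.mulLeft γ) : (Γ →₀ A) ≃+ (Γ →₀ A))
  map_one' := by
    apply AddEquiv.ext; intro f; ext a
    simp [Finsupp.domCongr_apply, Finsupp.equivMapDomain_apply]
    rfl
  map_mul' γ γ' := by
    apply AddEquiv.ext; intro f; ext a
    simp [AddAut.mul_apply, Finsupp.domCongr_apply, Finsupp.equivMapDomain_apply, Equiv.Perm.mul_apply, mul_assoc]
    rfl

/-- The action of `Γ` on `Multiplicative (⊕_Γ A)` used to build the wreath product. -/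
noncomputable def wreathφ : Γ →* MulAut (Multiplicative (Γ →₀ A)) where
  toFun γ := AddEquiv.toMultiplicative (shiftHom A Γ γ)
  map_one' := by ext x; simp
  map_mul' γ γ' := by ext x; simp

/-- The restricted wreath product `A ≀ Γ = (⊕_Γ A) ⋊ Γ`. -/
noncomputable abbrev Wreath := SemidirectProduct (Multiplicative (Γ →₀ A)) Γ (wreathφ A Γ)

/-- The mixed commutator length `cl_{G,N}` (∞ if not a product of mixed commutators). -/
noncomputable def clGN {G : Type*} [Group G] (N : Subgroup G) (x : G) : ℕ∞ :=
  sInf {n : ℕ∞ | ∃ k : ℕ, n = k ∧ ∃ g v : Fin k → G, (∀ i, v i ∈ N) ∧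
    x = (List.ofFn fun i => ⁅g i, v i⁆).prod}

/-- The rank of a subgroup: minimal size of a generating set. -/
noncomputable def rk {G : Type*} [Group G] (H : Subgroup G) : ℕ∞ :=
  sInf {n : ℕ∞ | ∃ S : Finset G, Subgroup.closure (S : Set G) = H ∧ n = S.card}

/-- The intermediate rank `intrk^Γ(Λ) = inf {rk Θ | Λ ≤ Θ ≤ Γ}`. -/
noncomputable def intrk {G : Type*} [Group G] (Λ : Subgroup G) : ℕ∞ :=
  sInf {n : ℕ∞ | ∃ Θ : Subgroup G, Λ ≤ Θ ∧ n = rk Θ}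

/-- The general rank in the sense of Malcev. -/
noncomputable def genrk (G : Type*) [Group G] : ℕ∞ :=
  sSup {n : ℕ∞ | ∃ Λ : Subgroup G, Λ.FG ∧ n = intrk Λ}

/-- The special rank in the sense of Malcev. -/
noncomputable def sperk (G : Type*) [Group G] : ℕ∞ :=
  sSup {n : ℕ∞ | ∃ Λ : Subgroup G, Λ.FG ∧ n = rk Λ}

/-
A mixed commutator `⁅g, w⁆` with `w ∈ ⊕_Γ ℤ` is `γ • w - w`, where `γ` is the `Γ`-component of `g`,
so `x` is a product of `n` mixed commutators iff `x ∈ R := ∑ᵢ (γᵢ - 1) • ⊕_Γ ℤ` for some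
`γ₁, …, γₙ`. The `γ` with `(γ - 1) • ⊕_Γ ℤ ⊆ R` form a subgroup, so if `Θ = ⟨γ₁, …, γₙ⟩` contains `Λ`,
every `δ_λ - δ_e` with `λ ∈ Λ`, hence `x`, lies in `R`. Conversely, the pushforward
`⊕_Γ ℤ → ⊕_{Θ\Γ} ℤ` kills `R`, while the image of `x` has a positive coefficient at `Θλᵢ` whenever
`λᵢ ∉ Θ`.
-/

section TwistSum

variable {Γ M : Type*} [Group Γ] [AddCommGroup M]

noncomputable def twistSum (ρ : Γ →* AddAut M) {n : ℕ} (s : Fin n → Γ) : (Fin n → M) →+ M :=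
  ∑ i, ((ρ (s i)).toAddMonoidHom - AddMonoidHom.id M).comp (Pi.evalAddMonoidHom (fun _ => M) i)

theorem twistSum_apply (ρ : Γ →* AddAut M) {n : ℕ} (s : Fin n → Γ) (w : Fin n → M) :
    twistSum ρ s w = ∑ i, (ρ (s i) (w i) - w i) := by
  simp [twistSum]

theorem apply_sub_self_mem_range_twistSum (ρ : Γ →* AddAut M) {n : ℕ} {s : Fin n → Γ} {γ : Γ}
    (hγ : γ ∈ Subgroup.closure (Set.range s)) (u : M) : ρ γ u - u ∈ (twistSum ρ s).range := by
  induction hγ using Subgroup.closure_induction generalizing u with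
  | mem x hx =>
    obtain ⟨j, rfl⟩ := hx
    refine ⟨Pi.single j u, ?_⟩
    rw [twistSum_apply, Finset.sum_eq_single j (fun i _ hij => by simp [hij]) (by simp)]
    simp
  | one => simp
  | mul x y _ _ hx hy =>
    have hsplit : ρ (x * y) u - u = (ρ x (ρ y u) - ρ y u) + (ρ y u - u) := by
      rw [map_mul, AddAut.mul_apply_old]; abel
    rw [hsplit]
    exact add_mem (hx _) (hy _)
  | inv x _ hx =>
    have hflip : ρ x⁻¹ u - u = -(ρ x (ρ x⁻¹ u) - ρ x⁻¹ u) := by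
      rw [← AddAut.mul_apply_old, ← map_mul, mul_inv_cancel, map_one, AddAut.one_apply_old]; abel
    rw [hflip]
    exact neg_mem (hx _)

end TwistSum

section CosetPush

variable {A Γ : Type*} [AddCommGroup A] [Group Γ]

theorem shiftHom_single (γ a : Γ) (b : A) : shiftHom A Γ γ (single a b) = single (γ * a) b :=
  Finsupp.equivMapDomain_single _ _ _

noncomputable def cosetPush (Θ : Subgroup Γ) :
    (Γ →₀ A) →+ (Quotient (QuotientGroup.rightRel Θ) →₀ A) :=
  Finsupp.mapDomain.addMonoidHom Quotient.mk''

theorem cosetPush_single (Θ : Subgroup Γ) (a : Γ) (b : A) :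
    cosetPush Θ (single a b) = single (Quotient.mk'' a) b :=
  Finsupp.mapDomain_single

theorem cosetPush_shiftHom {Θ : Subgroup Γ} {γ : Γ} (hγ : γ ∈ Θ) (u : Γ →₀ A) :
    cosetPush Θ (shiftHom A Γ γ u) = cosetPush Θ u := by
  show Finsupp.mapDomain _ (equivMapDomain (Equiv.mulLeft γ) u) = Finsupp.mapDomain _ u
  rw [Finsupp.equivMapDomain_eq_mapDomain, ← Finsupp.mapDomain_comp]
  congr 1
  funext a
  refine Quotient.sound' (QuotientGroup.rightRel_apply.2 ?_)
  simpa [mul_assoc] using inv_mem hγ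

theorem cosetPush_twistSum {Θ : Subgroup Γ} {n : ℕ} {s : Fin n → Γ} (hs : ∀ i, s i ∈ Θ)
    (w : Fin n → Γ →₀ A) : cosetPush Θ (twistSum (shiftHom A Γ) s w) = 0 := by
  simp [twistSum_apply, cosetPush_shiftHom (hs _)]

theorem mem_of_cosetPush_eq_zero {Θ : Subgroup Γ} {k : ℕ} (ls : Fin k → Γ)
    (h : cosetPush Θ (∑ i, (single (ls i) (1 : ℤ) - single 1 1)) = 0) (i : Fin k) : ls i ∈ Θ := by
  by_contra hi
  set c : Quotient (QuotientGroup.rightRel Θ) := Quotient.mk'' (ls i)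
  have hc : (Quotient.mk'' 1 : Quotient (QuotientGroup.rightRel Θ)) ≠ c := fun h1 =>
    hi (by simpa using QuotientGroup.rightRel_apply.1 (Quotient.exact' h1))
  have hcoeff : cosetPush Θ (∑ i, (single (ls i) (1 : ℤ) - single 1 1)) c
      = ∑ j, single (Quotient.mk'' (ls j) : Quotient (QuotientGroup.rightRel Θ)) (1 : ℤ) c := by
    simp [cosetPush_single, hc]
  have hpos : 0 < ∑ j, single (Quotient.mk'' (ls j) : Quotient (QuotientGroup.rightRel Θ)) (1 : ℤ) c :=
    Finset.sum_pos' (fun j _ => Finsupp.single_nonneg.2 zero_le_one c)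
      ⟨i, Finset.mem_univ i, by simp [c]⟩
  rw [h, Finsupp.coe_zero, Pi.zero_apply] at hcoeff
  exact hpos.ne' hcoeff.symm

end CosetPush

section Wreath

variable {A Γ : Type*} [AddCommGroup A] [Group Γ]

open SemidirectProduct

theorem commutatorElement_inl (g : Wreath A Γ) (m : Γ →₀ A) :
    ⁅g, (inl (Multiplicative.ofAdd m) : Wreath A Γ)⁆
      = inl (Multiplicative.ofAdd (shiftHom A Γ g.right m - m)) := by
  apply SemidirectProduct.ext
  · simp only [commutatorElement_def, mul_left, mul_right, inv_left, inv_right, left_inl,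
      right_inl, map_one, map_mul, map_inv, mul_one]
    simp [wreathφ, mul_comm, mul_left_comm, sub_eq_add_neg]
  · rw [right_inl]; simp [commutatorElement_def]

theorem prod_commutatorElement_inl {n : ℕ} (g : Fin n → Wreath A Γ) (w : Fin n → Γ →₀ A) :
    (List.ofFn fun i => ⁅g i, (inl (Multiplicative.ofAdd (w i)) : Wreath A Γ)⁆).prod
      = inl (Multiplicative.ofAdd (twistSum (shiftHom A Γ) (fun i => (g i).right) w)) := by
  have hcomm : (fun i => ⁅g i, (inl (Multiplicative.ofAdd (w i)) : Wreath A Γ)⁆)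
      = inl ∘ fun i => Multiplicative.ofAdd (shiftHom A Γ (g i).right (w i) - w i) :=
    funext fun i => commutatorElement_inl (g i) (w i)
  rw [hcomm, ← List.map_ofFn, ← map_list_prod, List.prod_ofFn, twistSum_apply, ofAdd_sum]

theorem clGN_inl_twistSum_le {n : ℕ} (s : Fin n → Γ) (w : Fin n → Γ →₀ A) :
    clGN (inl : Multiplicative (Γ →₀ A) →* Wreath A Γ).range
      (inl (Multiplicative.ofAdd (twistSum (shiftHom A Γ) s w))) ≤ n :=
  sInf_le ⟨n, rfl, fun i => inr (s i), fun i => inl (Multiplicative.ofAdd (w i)),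
    fun i => ⟨_, rfl⟩, by rw [prod_commutatorElement_inl]; rfl⟩

theorem le_clGN_inl {c : ℕ∞} {x : Γ →₀ A}
    (h : ∀ (n : ℕ) (s : Fin n → Γ), x ∈ (twistSum (shiftHom A Γ) s).range → c ≤ n) :
    c ≤ clGN (inl : Multiplicative (Γ →₀ A) →* Wreath A Γ).range (inl (Multiplicative.ofAdd x)) := by
  refine le_sInf ?_
  rintro _ ⟨n, rfl, g, v, hv, hx⟩
  choose m hm using hv
  obtain rfl : v = fun i => inl (Multiplicative.ofAdd (m i).toAdd) := funext fun i => (hm i).symm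
  rw [prod_commutatorElement_inl] at hx
  exact h n _ ⟨_, (Multiplicative.ofAdd.injective (inl_injective hx)).symm⟩

end Wreath

section IntermediateRank

variable {G : Type*} [Group G]

theorem intrk_le_of_le_closure {Λ : Subgroup G} {n : ℕ} (s : Fin n → G)
    (h : Λ ≤ Subgroup.closure (Set.range s)) : intrk Λ ≤ n := by
  classical
  calc intrk Λ ≤ rk (Subgroup.closure (Set.range s)) := sInf_le ⟨_, h, rfl⟩
    _ ≤ (Finset.univ.image s).card := sInf_le ⟨_, by simp, rfl⟩
    _ ≤ n := by exact_mod_cast Finset.card_image_le.trans (by simp)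

theorem le_intrk {Λ : Subgroup G} {c : ℕ∞}
    (h : ∀ (n : ℕ) (s : Fin n → G), Λ ≤ Subgroup.closure (Set.range s) → c ≤ n) :
    c ≤ intrk Λ := by
  refine le_sInf ?_
  rintro _ ⟨Θ, hΛ, rfl⟩
  refine le_sInf ?_
  rintro _ ⟨S, hS, rfl⟩
  have hrange : Set.range (fun i => (S.equivFin.symm i : G)) = S := by
    ext a
    exact ⟨by rintro ⟨i, rfl⟩; exact Subtype.prop _, fun ha => ⟨S.equivFin ⟨a, ha⟩, by simp⟩⟩
  exact h _ _ (by rwa [hrange, hS])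

end IntermediateRank

theorem sum_single_sub_single_one_mem_range_twistSum_iff {Γ : Type*} [Group Γ] {k n : ℕ}
    (ls : Fin k → Γ) (s : Fin n → Γ) :
    ∑ i, (single (ls i) (1 : ℤ) - single 1 1) ∈ (twistSum (shiftHom ℤ Γ) s).range ↔
      Subgroup.closure (Set.range ls) ≤ Subgroup.closure (Set.range s) := by
  constructor
  · rintro ⟨w, hw⟩
    refine (Subgroup.closure_le _).2 ?_
    rintro _ ⟨i, rfl⟩
    refine mem_of_cosetPush_eq_zero ls ?_ i
    rw [← hw]
    exact cosetPush_twistSum (fun j => Subgroup.subset_closure (Set.mem_range_self j)) w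
  · intro h
    refine AddSubgroup.sum_mem _ fun i _ => ?_
    simpa [shiftHom_single] using apply_sub_self_mem_range_twistSum (shiftHom ℤ Γ)
      (h (Subgroup.subset_closure (Set.mem_range_self i))) (single 1 1)

theorem clGN_eq_intrk_general {Γ : Type*} [Group Γ] (k : ℕ) (ls : Fin k → Γ) :
    clGN (SemidirectProduct.inl : Multiplicative (Γ →₀ ℤ) →* Wreath ℤ Γ).range
        (SemidirectProduct.inl (Multiplicative.ofAdd
          ((∑ i, Finsupp.single (ls i) (1 : ℤ)) - (k : ℤ) • Finsupp.single (1 : Γ) (1 : ℤ)))) =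
      intrk (Subgroup.closure (Set.range ls)) := by
  have hx : (∑ i, single (ls i) (1 : ℤ)) - (k : ℤ) • single (1 : Γ) (1 : ℤ)
      = ∑ i, (single (ls i) 1 - single 1 1) := by
    simp [Finset.sum_sub_distrib]
  rw [hx]
  refine le_antisymm (le_intrk fun n s h => ?_) (le_clGN_inl fun n s h => ?_)
  · obtain ⟨w, hw⟩ := (sum_single_sub_single_one_mem_range_twistSum_iff ls s).2 h
    exact hw ▸ clGN_inl_twistSum_le s w
  · exact intrk_le_of_le_closure s ((sum_single_sub_single_one_mem_range_twistSum_iff ls s).1 h)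

/-- exact value of the mixed commutator length of
`Σ δ_{λᵢ} - k δ_e` in `ℤ ≀ Γ`. -/
theorem clGN_eq_intrk {Γ : Type*} [Group Γ] (k : ℕ) (hk : 0 < k) (ls : Fin k → Γ)
    (hls : ∀ i, ls i ≠ 1) :
    clGN (SemidirectProduct.inl : Multiplicative (Γ →₀ ℤ) →* Wreath ℤ Γ).range
        (SemidirectProduct.inl (Multiplicative.ofAdd
          ((∑ i, Finsupp.single (ls i) (1 : ℤ)) - (k : ℤ) • Finsupp.single (1 : Γ) (1 : ℤ)))) =
      intrk (Subgroup.closure (Set.range ls)) :=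
  clGN_eq_intrk_general k ls
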